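/- arXiv:2503.09400 — 2 statements merged into one kernel-verified Lean document; each statement's English description precedes it below -/
import Mathlib

section
/- Let N ≥ 2, σ : Fin N → ℝ, and τ > 0. If there exist indices i, j with σ_i ≠ σ_j, then the softmax-weighted average Σ_i σ_i · exp(σ_i/τ) / Σ_j exp(σ_j/τ) is strictly greater than the uniform average (1/N) Σ_i σ_i. -/
lemma term_nonneg (τ : ℝ) (hτ : 0 < τ) (a b : ℝ) :
    0 ≤ (a - b) * (Real.exp (a / τ) - Real.exp (b / τ)) := by
  rcases le_total a b with h | h
  · have h2 : Real.exp (a / τ) ≤ Real.exp (b / τ) := Real.exp_le_exp.mpr (by gcongr)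
    nlinarith
  · have h2 : Real.exp (b / τ) ≤ Real.exp (a / τ) := Real.exp_le_exp.mpr (by gcongr)
    nlinarith

lemma term_pos (τ : ℝ) (hτ : 0 < τ) (a b : ℝ) (h : a ≠ b) :
    0 < (a - b) * (Real.exp (a / τ) - Real.exp (b / τ)) := by
  rcases lt_or_gt_of_ne h with h | h
  · apply mul_pos_of_neg_of_neg <;> simp only [sub_neg]
    · exact h
    · exact Real.exp_lt_exp.mpr (by gcongr)
  · apply mul_pos <;> simp only [sub_pos]
    · exact h
    · exact Real.exp_lt_exp.mpr (by gcongr)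

theorem softmax_avg_gt_uniform_avg (N : ℕ) (hN : 2 ≤ N) (σ : Fin N → ℝ) (τ : ℝ) (hτ : 0 < τ)
    (hneq : ∃ i j : Fin N, σ i ≠ σ j) :
    (∑ i, σ i * Real.exp (σ i / τ)) / (∑ j, Real.exp (σ j / τ)) >
      (1 / (N : ℝ)) * ∑ i, σ i := by
  obtain ⟨i0, j0, hij⟩ := hneq
  have hS2 : (0:ℝ) < ∑ j, Real.exp (σ j / τ) :=
    Finset.sum_pos (fun j _ => Real.exp_pos _) ⟨i0, Finset.mem_univ i0⟩
  have hNpos : (0:ℝ) < (N:ℝ) := by positivity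
  have key : ∑ i, ∑ j, (σ i - σ j) * (Real.exp (σ i / τ) - Real.exp (σ j / τ)) =
      2 * ((N:ℝ) * ∑ i, σ i * Real.exp (σ i / τ)) -
      2 * ((∑ i, σ i) * (∑ j, Real.exp (σ j / τ))) := by
    simp only [sub_mul, mul_sub, Finset.sum_sub_distrib, Finset.sum_const, Finset.card_univ,
      Fintype.card_fin, nsmul_eq_mul, ← Finset.sum_mul, ← Finset.mul_sum]
    ring
  have pos : 0 < ∑ i, ∑ j, (σ i - σ j) * (Real.exp (σ i / τ) - Real.exp (σ j / τ)) := by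
    apply Finset.sum_pos'
    · intro i _
      exact Finset.sum_nonneg fun j _ => term_nonneg τ hτ _ _
    · refine ⟨i0, Finset.mem_univ i0, ?_⟩
      apply Finset.sum_pos'
      · intro j _
        exact term_nonneg τ hτ _ _
      · exact ⟨j0, Finset.mem_univ j0, term_pos τ hτ _ _ hij⟩
  rw [gt_iff_lt, lt_div_iff₀ hS2]
  rw [key] at pos
  have heq : 1 / (N:ℝ) * (∑ i, σ i) * (∑ j, Real.exp (σ j / τ)) =
      ((∑ i, σ i) * (∑ j, Real.exp (σ j / τ))) / N := by ring
  rw [heq, div_lt_iff₀ hNpos]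
  nlinarith
end

section
/- Let N ≥ 1 and σ : Fin N → ℝ. The function τ ↦ Σ_i σ_i · exp(σ_i/τ) / Σ_j exp(σ_j/τ) defined for τ > 0 is antitone (non-increasing) in τ. -/
/-!
With `β = 1/τ` and partition function `Z β = ∑ i, exp (β σᵢ)`, the softmax average is `Z' / Z`,
the mean of `σ` under the Gibbs weights. Its derivative in `β` is `(Z'' Z - Z'^2) / Z^2`, the
variance of `σ` under those weights, which is nonnegative by Cauchy–Schwarz. So the average
increases with `β` and decreases with `τ`.
-/

open Real Finset

noncomputable section

variable {ι : Type*} [Fintype ι]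

def gibbsMean (σ : ι → ℝ) (β : ℝ) : ℝ :=
  (∑ i, σ i * exp (β * σ i)) / ∑ i, exp (β * σ i)

lemma sum_exp_mul_pos [Nonempty ι] (σ : ι → ℝ) (β : ℝ) : 0 < ∑ i, exp (β * σ i) :=
  sum_pos (fun _ _ => exp_pos _) univ_nonempty

lemma hasDerivAt_sum_mul_exp_mul (f σ : ι → ℝ) (β : ℝ) :
    HasDerivAt (fun β => ∑ i, f i * exp (β * σ i)) (∑ i, f i * σ i * exp (β * σ i)) β :=
  HasDerivAt.fun_sum fun i _ =>
    (((hasDerivAt_mul_const (σ i)).exp).const_mul (f i)).congr_deriv (by ring)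

lemma sq_sum_mul_exp_mul_le (σ : ι → ℝ) (β : ℝ) :
    (∑ i, σ i * exp (β * σ i)) ^ 2 ≤ (∑ i, σ i * σ i * exp (β * σ i)) * ∑ i, exp (β * σ i) :=
  sum_sq_le_sum_mul_sum_of_sq_le_mul _
    (fun _ _ => mul_nonneg (mul_self_nonneg _) (exp_pos _).le)
    (fun _ _ => (exp_pos _).le) (fun _ _ => (by ring : _ = _).le)

lemma hasDerivAt_gibbsMean [Nonempty ι] (σ : ι → ℝ) (β : ℝ) :
    HasDerivAt (gibbsMean σ)
      (((∑ i, σ i * σ i * exp (β * σ i)) * (∑ i, exp (β * σ i))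
        - (∑ i, σ i * exp (β * σ i)) ^ 2) / (∑ i, exp (β * σ i)) ^ 2) β := by
  have hZ := hasDerivAt_sum_mul_exp_mul (fun _ => 1) σ β
  simp only [one_mul] at hZ
  exact ((hasDerivAt_sum_mul_exp_mul σ σ β).div hZ (sum_exp_mul_pos σ β).ne').congr_deriv
    (by ring)

lemma gibbsMean_monotone [Nonempty ι] (σ : ι → ℝ) : Monotone (gibbsMean σ) :=
  monotone_of_hasDerivAt_nonneg (hasDerivAt_gibbsMean σ) fun β =>
    div_nonneg (sub_nonneg.2 (sq_sum_mul_exp_mul_le σ β)) (sq_nonneg _)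

end

theorem softmax_avg_antitone (N : ℕ) (hN : 1 ≤ N) (σ : Fin N → ℝ) :
    AntitoneOn
      (fun τ : ℝ => (∑ i, σ i * Real.exp (σ i / τ)) / (∑ j, Real.exp (σ j / τ)))
      (Set.Ioi (0 : ℝ)) := by
  have : Nonempty (Fin N) := ⟨⟨0, hN⟩⟩
  intro τ₁ hτ₁ τ₂ _ hτ
  have hβ : τ₂⁻¹ ≤ τ₁⁻¹ := inv_anti₀ hτ₁ hτ
  simpa only [gibbsMean, div_eq_inv_mul, mul_comm] using gibbsMean_monotone σ hβ
end
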